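/- arXiv:1401.5409 — 2 statements merged into one kernel-verified Lean document; each statement's English description precedes it below -/
import Mathlib

section
/- For all n ≥ 1 and any integer c with 1 ≤ c ≤ n, A(n-c)/A(n) ≤ (2/3)^{c(2n-c-1)/2}. -/
/-!
Writing `A (n + 1) = A n * (3n+1)! n! / ((2n)! (2n+1)!)`, the factor is at least `(3/2)^n`,
since passing from `n` to `n + 1` multiplies it by
`(3n+2)(3n+3)(3n+4)(n+1) / ((2n+1)(2n+2)²(2n+3)) ≥ 3/2`.
Hence `A (m + c) ≥ (3/2)^(m + (m+1) + ⋯ + (m+c-1)) * A m`, and for `n = m + c`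
that exponent is `c(2n-c-1)/2`.
-/

open Finset Nat

/-- `A n = ∏_{k=0}^{n-1} (3k+1)!/(n+k)!`, the ASM numbers (as rationals), with `A 0 = 1`. -/
def A (n : ℕ) : ℚ := ∏ k ∈ Finset.range n, ((3 * k + 1)! : ℚ) / ((n + k)! : ℚ)

lemma A_pos (n : ℕ) : 0 < A n :=
  prod_pos fun _ _ => by positivity

lemma prod_range_succ_factorial_add_mul (n : ℕ) :
    (∏ k ∈ range (n + 1), (n + 1 + k)!) * n ! =
      (∏ k ∈ range n, (n + k)!) * ((2 * n)! * (2 * n + 1)!) := by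
  calc (∏ k ∈ range (n + 1), (n + 1 + k)!) * n ! = ∏ k ∈ range (n + 2), (n + k)! := by
        rw [prod_range_succ' _ (n + 1)]
        simp only [add_zero, add_assoc, add_comm 1]
    _ = _ := by rw [prod_range_succ, prod_range_succ, mul_assoc, two_mul, add_assoc]

lemma A_succ (n : ℕ) :
    A (n + 1) = A n * (((3 * n + 1)! * n ! : ℚ) / ((2 * n)! * (2 * n + 1)!)) := by
  have h : (∏ k ∈ range (n + 1), ((n + 1 + k)! : ℚ)) * n ! =
      (∏ k ∈ range n, ((n + k)! : ℚ)) * ((2 * n)! * (2 * n + 1)!) := by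
    exact_mod_cast prod_range_succ_factorial_add_mul n
  rw [A, A, prod_div_distrib, prod_div_distrib, prod_range_succ (fun k => ((3 * k + 1)! : ℚ))]
  field_simp
  rw [h, mul_assoc]

lemma three_pow_mul_factorial_le (n : ℕ) :
    3 ^ n * ((2 * n)! * (2 * n + 1)!) ≤ 2 ^ n * ((3 * n + 1)! * n !) := by
  induction n with
  | zero => simp
  | succ n ih =>
    have step : 3 * ((2 * n + 1) * (2 * n + 2) * ((2 * n + 2) * (2 * n + 3))) ≤
        2 * ((3 * n + 2) * (3 * n + 3) * (3 * n + 4) * (n + 1)) := by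
      ring_nf; omega
    calc 3 ^ (n + 1) * ((2 * (n + 1))! * (2 * (n + 1) + 1)!)
        = 3 ^ n * ((2 * n)! * (2 * n + 1)!) *
            (3 * ((2 * n + 1) * (2 * n + 2) * ((2 * n + 2) * (2 * n + 3)))) := by
          rw [show 2 * (n + 1) = 2 * n + 1 + 1 by ring]
          simp only [factorial_succ]; ring
      _ ≤ 2 ^ n * ((3 * n + 1)! * n !) *
            (2 * ((3 * n + 2) * (3 * n + 3) * (3 * n + 4) * (n + 1))) :=
          Nat.mul_le_mul ih step
      _ = 2 ^ (n + 1) * ((3 * (n + 1) + 1)! * (n + 1)!) := by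
          rw [show 3 * (n + 1) + 1 = 3 * n + 1 + 1 + 1 + 1 by ring]
          simp only [factorial_succ]; ring

lemma three_halves_pow_mul_A_le_A_succ (n : ℕ) : (3 / 2 : ℚ) ^ n * A n ≤ A (n + 1) := by
  rw [A_succ, mul_comm, div_pow]
  refine mul_le_mul_of_nonneg_left ?_ (A_pos n).le
  rw [div_le_div_iff₀ (by positivity) (by positivity)]
  exact_mod_cast (three_pow_mul_factorial_le n).trans_eq (mul_comm _ _)

lemma three_halves_pow_sum_mul_A_le (m d : ℕ) :
    (3 / 2 : ℚ) ^ (∑ j ∈ range d, (m + j)) * A m ≤ A (m + d) := by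
  induction d with
  | zero => simp
  | succ d ih =>
    calc (3 / 2 : ℚ) ^ (∑ j ∈ range (d + 1), (m + j)) * A m
        = (3 / 2 : ℚ) ^ (m + d) * ((3 / 2 : ℚ) ^ (∑ j ∈ range d, (m + j)) * A m) := by
          rw [sum_range_succ, pow_add]; ring
      _ ≤ (3 / 2 : ℚ) ^ (m + d) * A (m + d) := by gcongr
      _ ≤ A (m + (d + 1)) := three_halves_pow_mul_A_le_A_succ (m + d)

lemma sum_range_add_mul_two (m c : ℕ) :
    (∑ j ∈ range c, (m + j)) * 2 = c * (2 * (m + c) - c - 1) := by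
  rw [sum_add_distrib, add_mul, sum_range_id_mul_two, sum_const, card_range, smul_eq_mul]
  rcases c with _ | c
  · simp
  · rw [show 2 * (m + (c + 1)) - (c + 1) - 1 = 2 * m + c by omega, add_tsub_cancel_right]
    ring

theorem stmt_4_general (n c : ℕ) (hcn : c ≤ n) :
    A (n - c) / A n ≤ (2 / 3 : ℚ) ^ (c * (2 * n - c - 1) / 2) := by
  obtain ⟨m, rfl⟩ := Nat.exists_eq_add_of_le' hcn
  rw [Nat.add_sub_cancel, Nat.div_eq_of_eq_mul_left two_pos (sum_range_add_mul_two m c).symm,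
    div_le_iff₀ (A_pos _), show (2 / 3 : ℚ) = (3 / 2)⁻¹ by norm_num, inv_pow, le_inv_mul_iff₀ (by positivity)]
  exact three_halves_pow_sum_mul_A_le m c

theorem stmt_4 (n c : ℕ) (hn : 1 ≤ n) (hc : 1 ≤ c) (hcn : c ≤ n) :
    A (n - c) / A n ≤ (2 / 3 : ℚ) ^ (c * (2 * n - c - 1) / 2) :=
  stmt_4_general n c hcn
end

section
/- Exactly one monotone triangle of size n (namely τ_min) has all n rows distinguished; exactly one monotone triangle has a maximal block of exactly n-1 consecutive distinguished rows; and exactly 6 monotone triangles (for n sufficiently large) have a maximal block of exactly n-2 consecutive distinguished rows. -/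
open Finset

/-- `τ` is a monotone triangle of size `n`: a triangular array `τ i j` (`1 ≤ j ≤ i ≤ n`)
of integers in `{1,…,n}` (normalized to be `0` outside the triangular domain),
with strictly increasing rows and the interlacing condition. -/
def IsMT (n : ℕ) (τ : ℕ → ℕ → ℕ) : Prop :=
  (∀ i j, ¬(1 ≤ j ∧ j ≤ i ∧ i ≤ n) → τ i j = 0) ∧
  (∀ i j, 1 ≤ j → j ≤ i → i ≤ n → 1 ≤ τ i j ∧ τ i j ≤ n) ∧
  (∀ i j, 1 ≤ j → j < i → i ≤ n → τ i j < τ i (j + 1)) ∧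
  (∀ i j, 1 ≤ j → j < i → i ≤ n → τ i j ≤ τ (i - 1) j ∧ τ (i - 1) j ≤ τ i (j + 1))

/-- Entry-wise comparison of triangular arrays of size `n`. -/
def MTle (n : ℕ) (τ σ : ℕ → ℕ → ℕ) : Prop :=
  ∀ i j, 1 ≤ j → j ≤ i → i ≤ n → τ i j ≤ σ i j

/-- The number of monotone triangles of size `n`. -/
noncomputable def MTcount (n : ℕ) : ℕ := {τ | IsMT n τ}.ncard

/-- The minimal monotone triangle, `τ_min i j = j`. -/
def tmin (n : ℕ) : ℕ → ℕ → ℕ := fun i j => if 1 ≤ j ∧ j ≤ i ∧ i ≤ n then j else 0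

/-- The maximal monotone triangle, `τ_max i j = n - i + j`. -/
def tmax (n : ℕ) : ℕ → ℕ → ℕ := fun i j => if 1 ≤ j ∧ j ≤ i ∧ i ≤ n then n - i + j else 0

/-- Row `i` of `τ` is distinguished: its entries are `1, 2, …, i`. -/
def Distinguished (n : ℕ) (τ : ℕ → ℕ → ℕ) (i : ℕ) : Prop :=
  ∀ l, 1 ≤ l → l ≤ i → τ i l = l

/-- Rank reversal: replace each entry `x` by `n - x + 1` and reverse each row. -/
def bar (n : ℕ) (τ : ℕ → ℕ → ℕ) : ℕ → ℕ → ℕ :=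
  fun i j => if 1 ≤ j ∧ j ≤ i ∧ i ≤ n then n - τ i (i - j + 1) + 1 else 0

/-- Entry-wise infimum of an `r`-tuple. -/
noncomputable def infTuple {r : ℕ} (τs : Fin r → ℕ → ℕ → ℕ) : ℕ → ℕ → ℕ :=
  fun i j => ⨅ m, τs m i j

/-- Entry-wise supremum of an `r`-tuple. -/
noncomputable def supTuple {r : ℕ} (τs : Fin r → ℕ → ℕ → ℕ) : ℕ → ℕ → ℕ :=
  fun i j => ⨆ m, τs m i j

/-- `τ` has a block of `L` consecutive distinguished rows within `{1,…,n}`. -/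
def HasRun (n : ℕ) (τ : ℕ → ℕ → ℕ) (L : ℕ) : Prop :=
  ∃ a, 1 ≤ a ∧ a + L ≤ n + 1 ∧ ∀ i, a ≤ i → i < a + L → Distinguished n τ i

/-- The longest block of consecutive distinguished rows of `τ` has length exactly `L`. -/
def MaxRun (n : ℕ) (τ : ℕ → ℕ → ℕ) (L : ℕ) : Prop :=
  HasRun n τ L ∧ ¬ HasRun n τ (L + 1)

section Aux
variable {n : ℕ} {τ : ℕ → ℕ → ℕ}

lemma mt_gap (h : IsMT n τ) {i : ℕ} (hi : i ≤ n) :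
    ∀ k j, 1 ≤ j → j + k ≤ i → τ i j + k ≤ τ i (j + k) := by
  intro k
  induction k with
  | zero => intro j _ _; simp
  | succ k ih =>
    intro j hj hjk
    have h1 := ih j hj (by omega)
    have h2 := h.2.2.1 i (j + k) (by omega) (by omega) hi
    have h3 : τ i (j + (k + 1)) = τ i ((j + k) + 1) := rfl
    omega

lemma mt_ge (h : IsMT n τ) {i j : ℕ} (hj : 1 ≤ j) (hji : j ≤ i) (hi : i ≤ n) :
    j ≤ τ i j := by
  have h1 := h.2.1 i 1 le_rfl (by omega) hi
  have h2 := mt_gap h hi (j - 1) 1 le_rfl (by omega)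
  rw [show 1 + (j - 1) = j by omega] at h2
  omega

lemma row_n (h : IsMT n τ) (hn : 1 ≤ n) : Distinguished n τ n := by
  intro l hl hln
  have h1 := mt_ge h hl hln le_rfl
  have h2 := mt_gap h (le_refl n) (n - l) l hl (by omega)
  have h3 := h.2.1 n n hn le_rfl le_rfl
  rw [show l + (n - l) = n by omega] at h2
  omega

lemma mt_below (h : IsMT n τ) {i : ℕ} (hi : i + 1 ≤ n)
    (hd : Distinguished n τ (i + 1)) {j : ℕ} (hj : 1 ≤ j) (hji : j ≤ i) :
    j ≤ τ i j ∧ τ i j ≤ j + 1 := by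
  have h1 := h.2.2.2 (i + 1) j hj (by omega) hi
  simp only [Nat.add_sub_cancel] at h1
  rw [hd j hj (by omega), hd (j + 1) (by omega) (by omega)] at h1
  exact h1

lemma mt_above (h : IsMT n τ) {i : ℕ} (hi : i ≤ n)
    (hd : Distinguished n τ (i - 1)) {j : ℕ} (hj : 1 ≤ j) (hji : j < i) :
    τ i j ≤ j := by
  have h1 := h.2.2.2 i j hj hji hi
  have h2 := hd j hj (by omega)
  omega

end Aux
lemma tmin_isMT (n : ℕ) : IsMT n (tmin n) := by
  refine ⟨?_, ?_, ?_, ?_⟩ <;> intro i j <;> simp only [tmin] <;> intros <;>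
    split_ifs <;> omega

lemma part1 (n : ℕ) (hn : 1 ≤ n) : {τ | IsMT n τ ∧ MaxRun n τ n} = {tmin n} := by
  ext τ
  simp only [Set.mem_setOf_eq, Set.mem_singleton_iff]
  constructor
  · rintro ⟨hmt, ⟨a, ha1, ha2, hd⟩, -⟩
    have ha : a = 1 := by omega
    subst ha
    funext i j
    by_cases hdom : 1 ≤ j ∧ j ≤ i ∧ i ≤ n
    · have := hd i (by omega) (by omega) j hdom.1 hdom.2.1
      simp only [tmin, if_pos hdom]
      exact this
    · rw [hmt.1 i j hdom]
      simp only [tmin, if_neg hdom]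
  · rintro rfl
    refine ⟨tmin_isMT n, ⟨1, le_rfl, by omega, ?_⟩, ?_⟩
    · intro i _ hi l hl hli
      simp only [tmin]
      rw [if_pos ⟨hl, hli, by omega⟩]
    · rintro ⟨a, ha1, ha2, -⟩
      omega
/-- The unique triangle with maximal run `n-1`. -/
def T2 (n : ℕ) : ℕ → ℕ → ℕ :=
  fun i j => if 1 ≤ j ∧ j ≤ i ∧ i ≤ n then (if i = 1 then 2 else j) else 0

lemma T2_isMT (n : ℕ) (hn : 2 ≤ n) : IsMT n (T2 n) := by
  refine ⟨?_, ?_, ?_, ?_⟩ <;> intro i j <;> simp only [T2] <;> intros <;>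
    split_ifs <;> omega

lemma part2 (n : ℕ) (hn : 2 ≤ n) : {τ | IsMT n τ ∧ MaxRun n τ (n - 1)} = {T2 n} := by
  ext τ
  simp only [Set.mem_setOf_eq, Set.mem_singleton_iff]
  constructor
  · rintro ⟨hmt, ⟨a, ha1, ha2, hd⟩, hnr⟩
    have hnr' : ¬ HasRun n τ n := by rwa [show n - 1 + 1 = n by omega] at hnr
    have hrn : Distinguished n τ n := row_n hmt (by omega)
    have ha : a = 2 := by
      rcases (by omega : a = 1 ∨ a = 2) with h | h
      · exfalso
        exact hnr' ⟨1, le_rfl, by omega, fun i hi1 hi2 => by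
          rcases (by omega : i ≤ n - 1 ∨ i = n) with h' | h'
          · exact hd i (by omega) (by omega)
          · exact h' ▸ hrn⟩
      · exact h
    subst ha
    have hd2 : ∀ i, 2 ≤ i → i ≤ n → Distinguished n τ i := fun i h1 h2 =>
      hd i h1 (by omega)
    have h11 : τ 1 1 = 2 := by
      have hnd1 : ¬ Distinguished n τ 1 := by
        intro hc
        exact hnr' ⟨1, le_rfl, by omega, fun i hi1 hi2 => by
          rcases (by omega : i = 1 ∨ 2 ≤ i) with h' | h'
          · exact h' ▸ hc
          · exact hd2 i h' (by omega)⟩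
      have hlt := hmt.2.2.2 2 1 le_rfl (by omega) hn
      have hr1 : τ (2 - 1) 1 = τ 1 1 := rfl
      have hr2 : τ 2 (1 + 1) = τ 2 2 := rfl
      have e1 : τ 2 1 = 1 := hd2 2 le_rfl hn 1 le_rfl (by omega)
      have e2 : τ 2 2 = 2 := hd2 2 le_rfl hn 2 (by omega) le_rfl
      have : τ 1 1 ≠ 1 := by
        intro hc
        exact hnd1 (fun l hl1 hl2 => by
          have hl : l = 1 := by omega
          subst hl; omega)
      omega
    funext i j
    by_cases hdom : 1 ≤ j ∧ j ≤ i ∧ i ≤ n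
    · simp only [T2, if_pos hdom]
      rcases (by omega : i = 1 ∨ 2 ≤ i) with h' | h'
      · have hj1 : j = 1 := by omega
        subst h'; subst hj1
        rw [if_pos rfl]; exact h11
      · rw [if_neg (by omega)]
        exact hd2 i h' hdom.2.2 j hdom.1 hdom.2.1
    · rw [hmt.1 i j hdom]
      simp only [T2, if_neg hdom]
  · rintro rfl
    refine ⟨T2_isMT n hn, ⟨2, by omega, by omega, ?_⟩, ?_⟩
    · intro i hi1 hi2 l hl hli
      simp only [T2]
      rw [if_pos ⟨hl, hli, by omega⟩, if_neg (by omega)]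
    · rintro ⟨a, ha1, ha2, hd⟩
      have : a = 1 := by omega
      subst this
      have h1 := hd 1 le_rfl (by omega) 1 le_rfl le_rfl
      have h2 : T2 n 1 1 = 2 := by simp only [T2]; split_ifs <;> omega
      omega
/-- Triangle: tmin except the entry at `(n-1, n-1)` equals `n`. -/
def T3a (n : ℕ) : ℕ → ℕ → ℕ :=
  fun i j => if 1 ≤ j ∧ j ≤ i ∧ i ≤ n then (if i = n - 1 ∧ j = n - 1 then n else j) else 0

/-- Triangle: tmin except row 1 is `x` and row 2 is `(u, 3)`. -/
def T3b (n x u : ℕ) : ℕ → ℕ → ℕ :=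
  fun i j =>
    if 1 ≤ j ∧ j ≤ i ∧ i ≤ n then
      (if i = 1 then x else if i = 2 then (if j = 1 then u else 3) else j)
    else 0

lemma T3a_isMT (n : ℕ) (hn : 5 ≤ n) : IsMT n (T3a n) := by
  refine ⟨?_, ?_, ?_, ?_⟩ <;> intro i j <;> simp only [T3a] <;> intros <;>
    split_ifs <;> omega

lemma T3b_isMT (n x u : ℕ) (hn : 5 ≤ n) (hu1 : 1 ≤ u) (hu2 : u ≤ 2)
    (hux : u ≤ x) (hx : x ≤ 3) : IsMT n (T3b n x u) := by
  refine ⟨?_, ?_, ?_, ?_⟩ <;> intro i j <;> simp only [T3b] <;> intros <;>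
    split_ifs <;> omega

lemma T3a_maxRun (n : ℕ) (hn : 5 ≤ n) : MaxRun n (T3a n) (n - 2) := by
  constructor
  · refine ⟨1, le_rfl, by omega, ?_⟩
    intro i hi1 hi2 l hl hli
    simp only [T3a]
    rw [if_pos ⟨hl, hli, by omega⟩, if_neg (by omega)]
  · rintro ⟨a, ha1, ha2, hd⟩
    have h1 := hd (n - 1) (by omega) (by omega) (n - 1) (by omega) le_rfl
    have h2 : T3a n (n - 1) (n - 1) = n := by
      simp only [T3a, and_self, if_true]; split_ifs <;> omega
    omega

lemma T3b_maxRun (n x u : ℕ) (hn : 5 ≤ n) : MaxRun n (T3b n x u) (n - 2) := by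
  constructor
  · refine ⟨3, by omega, by omega, ?_⟩
    intro i hi1 hi2 l hl hli
    simp only [T3b]
    rw [if_pos ⟨hl, hli, by omega⟩, if_neg (by omega), if_neg (by omega)]
  · rintro ⟨a, ha1, ha2, hd⟩
    have h1 := hd 2 (by omega) (by omega) 2 (by omega) le_rfl
    have h2 : T3b n x u 2 2 = 3 := by
      simp only [T3b]; split_ifs <;> omega
    omega
lemma part3 (n : ℕ) (hn : 5 ≤ n) :
    {τ | IsMT n τ ∧ MaxRun n τ (n - 2)} =
      {T3a n, T3b n 1 1, T3b n 2 1, T3b n 3 1, T3b n 2 2, T3b n 3 2} := by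
  ext τ
  simp only [Set.mem_setOf_eq, Set.mem_insert_iff, Set.mem_singleton_iff]
  constructor
  · rintro ⟨hmt, ⟨a, ha1, ha2, hd⟩, hnr⟩
    have hnr' : ¬ HasRun n τ (n - 1) := by
      rwa [show n - 2 + 1 = n - 1 by omega] at hnr
    have hrn : Distinguished n τ n := row_n hmt (by omega)
    have ha2' : a = 1 ∨ a = 2 ∨ a = 3 := by omega
    have hnot2 : a ≠ 2 := by
      rintro rfl
      refine hnr' ⟨2, by omega, by omega, fun i hi1 hi2 => ?_⟩
      rcases (by omega : i ≤ n - 1 ∨ i = n) with h' | h'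
      · exact hd i hi1 (by omega)
      · exact h' ▸ hrn
    rcases ha2' with rfl | rfl | rfl
    · -- rows 1 .. n-2 distinguished, row n-1 = (1,...,n-2,n)
      left
      have hdlow : ∀ i, 1 ≤ i → i ≤ n - 2 → Distinguished n τ i := fun i h1 h2 =>
        hd i h1 (by omega)
      have hnd : ¬ Distinguished n τ (n - 1) := by
        intro hc
        refine hnr' ⟨1, le_rfl, by omega, fun i hi1 hi2 => ?_⟩
        rcases (by omega : i ≤ n - 2 ∨ i = n - 1) with h' | h'
        · exact hdlow i hi1 h'
        · exact h' ▸ hc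
      -- entries of row n-1 for j ≤ n-2
      have hrow : ∀ j, 1 ≤ j → j ≤ n - 2 → τ (n - 1) j = j := by
        intro j hj1 hj2
        have h1 := mt_ge hmt hj1 (by omega) (by omega : n - 1 ≤ n)
        have hdd : Distinguished n τ (n - 1 - 1) := by
          rw [show n - 1 - 1 = n - 2 by omega]
          exact hdlow (n - 2) (by omega) le_rfl
        have h2 := mt_above hmt (by omega : n - 1 ≤ n) hdd hj1 (by omega : j < n - 1)
        omega
      have hcorner : τ (n - 1) (n - 1) = n := by
        have h1 := hmt.2.2.2 n (n - 1) (by omega) (by omega) le_rfl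
        have e0 : τ (n - 1) (n - 1) = τ (n - 1) (n - 1 + 1 - 1) := by
          rw [show n - 1 + 1 - 1 = n - 1 by omega]
        have e1 : τ n (n - 1) = n - 1 := hrn (n - 1) (by omega) (by omega)
        have e2 : τ n (n - 1 + 1) = n := by
          rw [show n - 1 + 1 = n by omega]; exact hrn n (by omega) le_rfl
        have e3 : τ (n - 1) (n - 1) ≠ n - 1 := by
          intro hc
          refine hnd fun l hl1 hl2 => ?_
          rcases (by omega : l ≤ n - 2 ∨ l = n - 1) with h' | h'
          · exact hrow l hl1 h'
          · rw [h']; exact hc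
        have e4 : τ (n - 1 + 1 - 1) (n - 1) = τ (n - 1) (n - 1) := by
          rw [show n - 1 + 1 - 1 = n - 1 by omega]
        have e5 : τ (n - 1) (n - 1) = τ (n - 1) ((n - 1) + 1 - 1) := by
          rw [show (n - 1) + 1 - 1 = n - 1 by omega]
        have h1' := hmt.2.2.2 n (n - 1) (by omega) (by omega) le_rfl
        -- h1' : τ n (n-1) ≤ τ (n-1) (n-1) ∧ τ (n-1) (n-1) ≤ τ n (n-1+1)
        have e6 : τ (n - 1) (n - 1) = τ (n - 1) (n - 1) := rfl
        omega
      funext i j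
      by_cases hdom : 1 ≤ j ∧ j ≤ i ∧ i ≤ n
      · simp only [T3a, if_pos hdom]
        rcases (by omega : i ≤ n - 2 ∨ i = n - 1 ∨ i = n) with h' | h' | h'
        · rw [if_neg (by omega)]
          exact hdlow i (by omega) h' j hdom.1 hdom.2.1
        · subst h'
          rcases (by omega : j ≤ n - 2 ∨ j = n - 1) with h'' | h''
          · rw [if_neg (by omega)]
            exact hrow j hdom.1 h''
          · subst h''
            rw [if_pos ⟨rfl, rfl⟩]
            exact hcorner
        · subst h'
          rw [if_neg (by omega)]
          exact hrn j hdom.1 hdom.2.1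
      · rw [hmt.1 i j hdom]
        simp only [T3a, if_neg hdom]
    · exact absurd rfl hnot2
    · -- rows 3 .. n distinguished
      right
      have hdhigh : ∀ i, 3 ≤ i → i ≤ n → Distinguished n τ i := fun i h1 h2 =>
        hd i h1 (by omega)
      have hnd2 : ¬ Distinguished n τ 2 := by
        intro hc
        refine hnr' ⟨2, by omega, by omega, fun i hi1 hi2 => ?_⟩
        rcases (by omega : i = 2 ∨ 3 ≤ i) with h' | h'
        · exact h' ▸ hc
        · exact hdhigh i h' (by omega)
      have hb1 := mt_below hmt (by omega : 2 + 1 ≤ n) (hdhigh 3 le_rfl (by omega))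
        (j := 1) (by omega) (by omega)
      have hb2 := mt_below hmt (by omega : 2 + 1 ≤ n) (hdhigh 3 le_rfl (by omega))
        (j := 2) (by omega) (by omega)
      have hlt : τ 2 1 < τ 2 2 := by
        have := hmt.2.2.1 2 1 le_rfl (by omega) (by omega)
        have e : τ 2 (1 + 1) = τ 2 2 := rfl
        omega
      have h22 : τ 2 2 = 3 := by
        rcases (by omega : τ 2 2 = 2 ∨ τ 2 2 = 3) with h' | h'
        · exfalso
          apply hnd2
          intro l hl1 hl2
          rcases (by omega : l = 1 ∨ l = 2) with rfl | rfl
          · omega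
          · omega
        · exact h'
      have h11 : τ 2 1 ≤ τ 1 1 ∧ τ 1 1 ≤ 3 := by
        have h1 := hmt.2.2.2 2 1 le_rfl (by omega) (by omega)
        have e1 : τ (2 - 1) 1 = τ 1 1 := rfl
        have e2 : τ 2 (1 + 1) = τ 2 2 := rfl
        omega
      have h11' : 1 ≤ τ 1 1 := (hmt.2.1 1 1 le_rfl le_rfl (by omega)).1
      have heq : τ = T3b n (τ 1 1) (τ 2 1) := by
        funext i j
        by_cases hdom : 1 ≤ j ∧ j ≤ i ∧ i ≤ n
        · simp only [T3b, if_pos hdom]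
          rcases (by omega : i = 1 ∨ i = 2 ∨ 3 ≤ i) with h' | h' | h'
          · subst h'
            have : j = 1 := by omega
            subst this
            rw [if_pos rfl]
          · subst h'
            rw [if_neg (by omega)]
            rcases (by omega : j = 1 ∨ j = 2) with rfl | rfl
            · rw [if_pos rfl, if_pos rfl]
            · rw [if_pos rfl, if_neg (by omega)]
              exact h22
          · rw [if_neg (by omega), if_neg (by omega)]
            exact hdhigh i h' hdom.2.2 j hdom.1 hdom.2.1
        · rw [hmt.1 i j hdom]
          simp only [T3b, if_neg hdom]
      have hu : τ 2 1 = 1 ∨ τ 2 1 = 2 := by omega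
      rcases hu with hu | hu <;> rw [hu] at heq
      · have hx : τ 1 1 = 1 ∨ τ 1 1 = 2 ∨ τ 1 1 = 3 := by omega
        rcases hx with hx | hx | hx <;> rw [hx] at heq <;> tauto
      · have hx : τ 1 1 = 2 ∨ τ 1 1 = 3 := by omega
        rcases hx with hx | hx <;> rw [hx] at heq <;> tauto
  · intro h
    rcases h with rfl | rfl | rfl | rfl | rfl | rfl
    · exact ⟨T3a_isMT n hn, T3a_maxRun n hn⟩
    · exact ⟨T3b_isMT n 1 1 hn le_rfl (by omega) le_rfl (by omega), T3b_maxRun n 1 1 hn⟩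
    · exact ⟨T3b_isMT n 2 1 hn le_rfl (by omega) (by omega) (by omega), T3b_maxRun n 2 1 hn⟩
    · exact ⟨T3b_isMT n 3 1 hn le_rfl (by omega) (by omega) (by omega), T3b_maxRun n 3 1 hn⟩
    · exact ⟨T3b_isMT n 2 2 hn (by omega) le_rfl le_rfl (by omega), T3b_maxRun n 2 2 hn⟩
    · exact ⟨T3b_isMT n 3 2 hn (by omega) le_rfl (by omega) le_rfl, T3b_maxRun n 3 2 hn⟩
lemma T3a_val (n : ℕ) (hn : 5 ≤ n) : T3a n (n - 1) (n - 1) = n := by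
  simp only [T3a, and_self, if_true]; split_ifs <;> omega

lemma T3b_val1 (n x u : ℕ) (hn : 5 ≤ n) : T3b n x u (n - 1) (n - 1) = n - 1 := by
  simp only [T3b]; split_ifs <;> omega

lemma T3b_val2 (n x u : ℕ) (hn : 5 ≤ n) : T3b n x u 1 1 = x := by
  simp only [T3b]; split_ifs <;> omega

lemma T3b_val3 (n x u : ℕ) (hn : 5 ≤ n) : T3b n x u 2 1 = u := by
  simp only [T3b]; split_ifs <;> omega

lemma T3_ne_ab (n x u : ℕ) (hn : 5 ≤ n) : T3a n ≠ T3b n x u := by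
  intro h
  have := congrFun (congrFun h (n - 1)) (n - 1)
  rw [T3a_val n hn, T3b_val1 n x u hn] at this
  omega

lemma T3_ne_bb (n x u x' u' : ℕ) (hn : 5 ≤ n) (hne : x ≠ x' ∨ u ≠ u') :
    T3b n x u ≠ T3b n x' u' := by
  intro h
  have h1 := congrFun (congrFun h 1) 1
  have h2 := congrFun (congrFun h 2) 1
  rw [T3b_val2 n x u hn, T3b_val2 n x' u' hn] at h1
  rw [T3b_val3 n x u hn, T3b_val3 n x' u' hn] at h2
  omega

lemma part3_count (n : ℕ) (hn : 5 ≤ n) :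
    ({T3a n, T3b n 1 1, T3b n 2 1, T3b n 3 1, T3b n 2 2, T3b n 3 2} :
      Set (ℕ → ℕ → ℕ)).ncard = 6 := by
  have f5 : ({T3b n 3 2} : Set (ℕ → ℕ → ℕ)).Finite := Set.finite_singleton _
  have f4 := f5.insert (T3b n 2 2)
  have f3 := f4.insert (T3b n 3 1)
  have f2 := f3.insert (T3b n 2 1)
  have f1 := f2.insert (T3b n 1 1)
  rw [Set.ncard_insert_of_notMem ?m1 f1, Set.ncard_insert_of_notMem ?m2 f2,
    Set.ncard_insert_of_notMem ?m3 f3, Set.ncard_insert_of_notMem ?m4 f4,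
    Set.ncard_insert_of_notMem ?m5 f5, Set.ncard_singleton]
  case m1 =>
    simp only [Set.mem_insert_iff, Set.mem_singleton_iff]
    push_neg
    exact ⟨T3_ne_ab n 1 1 hn, T3_ne_ab n 2 1 hn, T3_ne_ab n 3 1 hn,
      T3_ne_ab n 2 2 hn, T3_ne_ab n 3 2 hn⟩
  case m2 =>
    simp only [Set.mem_insert_iff, Set.mem_singleton_iff]
    push_neg
    exact ⟨T3_ne_bb n 1 1 2 1 hn (by omega), T3_ne_bb n 1 1 3 1 hn (by omega),
      T3_ne_bb n 1 1 2 2 hn (by omega), T3_ne_bb n 1 1 3 2 hn (by omega)⟩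
  case m3 =>
    simp only [Set.mem_insert_iff, Set.mem_singleton_iff]
    push_neg
    exact ⟨T3_ne_bb n 2 1 3 1 hn (by omega), T3_ne_bb n 2 1 2 2 hn (by omega),
      T3_ne_bb n 2 1 3 2 hn (by omega)⟩
  case m4 =>
    simp only [Set.mem_insert_iff, Set.mem_singleton_iff]
    push_neg
    exact ⟨T3_ne_bb n 3 1 2 2 hn (by omega), T3_ne_bb n 3 1 3 2 hn (by omega)⟩
  case m5 =>
    simp only [Set.mem_singleton_iff]
    exact T3_ne_bb n 2 2 3 2 hn (by omega)

theorem stmt_17 :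
    (∀ n : ℕ, 1 ≤ n → {τ | IsMT n τ ∧ MaxRun n τ n}.ncard = 1) ∧
    (∀ n : ℕ, 2 ≤ n → {τ | IsMT n τ ∧ MaxRun n τ (n - 1)}.ncard = 1) ∧
    (∃ N : ℕ, ∀ n : ℕ, N ≤ n → {τ | IsMT n τ ∧ MaxRun n τ (n - 2)}.ncard = 6) := by
  refine ⟨fun n hn => ?_, fun n hn => ?_, ⟨5, fun n hn => ?_⟩⟩
  · rw [part1 n hn, Set.ncard_singleton]
  · rw [part2 n hn, Set.ncard_singleton]
  · rw [part3 n hn, part3_count n hn]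
end
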